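/- With the notation of the context, for every measurable function F : Z^T → [0,∞] one has Σ_{k∈{1,…,M}^T} ∫_{Z^{T·M}} b(k|v) F(v^{(k)}) (π⊗Φ)(v) ν^{⊗TM}(dv) = Σ_{k∈{1,…,M}^T} ∫_{Z^{T·M}} b(k|v) F(v^{(k)}) ψ̄(v) ν^{⊗TM}(dv); that is, the expectation of a backward-sampled path functional is the same whether the particles are generated by the conditional SMC algorithm started from a π-distributed path or by the unconditional particle filter reweighted by its normalising-constant estimator. -/

import Mathlib

/-!
Fix an index path `k` and relabel the particles at each time `t` by the transposition `(0 k_t)`.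
This preserves `ν^{⊗TM}`, turns `b(k|v) F(v^{(k)})` into `b(𝟏|v) F(v^{(𝟏)})`, leaves `ψ` and `Ĉ`
unchanged, and turns `(π⊗Φ)(v)` into `M^T b(k|v) ψ̄(v)`. For the last point split `ψ(v)` into its
factors along the path `v^{(k)}` and the density of `Φ` with reference slots `k`; the factors along
the path combine with `b(k|v)` and `Ĉ(v)` into `γ(v^{(k)}) / M^T`, because the normalising sums of
the backward kernel cancel against the mixture densities of the filter. After relabelling, every
term of the right side is the same integral, and on the left `∑_k b(k|v) = 1` collapses the sum
to `M^T` times that integral.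
-/

open MeasureTheory Finset
open scoped ENNReal

namespace SSM16

variable {Z : Type*}

/-- The path `v^{(k)}` extracted from the particle array `v`. -/
def pathOf (n m : ℕ) (v : Fin (n + 1) → Fin (m + 1) → Z)
    (k : Fin (n + 1) → Fin (m + 1)) : Fin (n + 1) → Z := fun t => v t (k t)

/-- The constant index path `𝟏`. -/
def onePath (n m : ℕ) : Fin (n + 1) → Fin (m + 1) := fun _ => 0

/-- The unnormalised target density `γ(z)`. -/
noncomputable def gammaSSM (n : ℕ) (m₀ : Z → ℝ) (f : Z → Z → ℝ)
    (w : Fin (n + 1) → Z → ℝ) (z : Fin (n + 1) → Z) : ℝ :=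
  m₀ (z 0) * (∏ t : Fin n, f (z t.castSucc) (z t.succ)) * ∏ t, w t (z t)

/-- The backward-sampling probabilities `b(k|v)`. -/
noncomputable def bBack (n m : ℕ) (f : Z → Z → ℝ) (w : Fin (n + 1) → Z → ℝ)
    (k : Fin (n + 1) → Fin (m + 1)) (v : Fin (n + 1) → Fin (m + 1) → Z) : ℝ :=
  (w (Fin.last n) (v (Fin.last n) (k (Fin.last n))) /
      ∑ i, w (Fin.last n) (v (Fin.last n) i)) *
    ∏ t : Fin n,
      (w t.castSucc (v t.castSucc (k t.castSucc)) *
          f (v t.castSucc (k t.castSucc)) (v t.succ (k t.succ))) /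
        ∑ i, w t.castSucc (v t.castSucc i) * f (v t.castSucc i) (v t.succ (k t.succ))

/-- The particle-filter density `ψ(v)`. -/
noncomputable def psiPF (n m : ℕ) (m₀ : Z → ℝ) (f : Z → Z → ℝ)
    (w : Fin (n + 1) → Z → ℝ) (v : Fin (n + 1) → Fin (m + 1) → Z) : ℝ :=
  (∏ i, m₀ (v 0 i)) *
    ∏ t : Fin n, ∏ i : Fin (m + 1),
      (∑ j, w t.castSucc (v t.castSucc j) * f (v t.castSucc j) (v t.succ i)) /
        ∑ j, w t.castSucc (v t.castSucc j)

/-- The normalising-constant estimator `Ĉ(v)`. -/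
noncomputable def Chat (n m : ℕ) (w : Fin (n + 1) → Z → ℝ)
    (v : Fin (n + 1) → Fin (m + 1) → Z) : ℝ :=
  ∏ t, ((m : ℝ) + 1)⁻¹ * ∑ i, w t (v t i)

/-- The conditional-SMC density `(π⊗Φ)(v)`, with `π = γ/C`. -/
noncomputable def piPhi (n m : ℕ) (m₀ : Z → ℝ) (f : Z → Z → ℝ)
    (w : Fin (n + 1) → Z → ℝ) (C : ℝ) (v : Fin (n + 1) → Fin (m + 1) → Z) : ℝ :=
  (gammaSSM n m₀ f w (pathOf n m v (onePath n m)) / C) *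
    (∏ i ∈ univ.erase (0 : Fin (m + 1)), m₀ (v 0 i)) *
    ∏ t : Fin n, ∏ i ∈ univ.erase (0 : Fin (m + 1)),
      (∑ j, w t.castSucc (v t.castSucc j) * f (v t.castSucc j) (v t.succ i)) /
        ∑ j, w t.castSucc (v t.castSucc j)

theorem sum_mul_prod_chain_eq_one {α R : Type*} [Fintype α] [CommSemiring R] :
    ∀ {n : ℕ} (B : α → R) (A : Fin n → α → α → R), ∑ i, B i = 1 → (∀ t i, ∑ j, A t j i = 1) →
      ∑ k : Fin (n + 1) → α, B (k (Fin.last n)) * ∏ t : Fin n, A t (k t.castSucc) (k t.succ) = 1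
  | 0, B, _, hB, _ => by
    rw [← hB]
    exact Fintype.sum_equiv (Equiv.funUnique (Fin 1) α) _ B fun _ => by simp
  | n + 1, B, A, hB, hA => by
    rw [← (Fin.consEquiv fun _ => α).sum_comp, Fintype.sum_prod_type, sum_comm]
    simp only [Fin.consEquiv_apply, Fin.cons_last, Fin.cons_succ, Fin.prod_univ_succ,
      Fin.castSucc_zero, Fin.cons_zero, Fin.castSucc_succ]
    simp only [mul_left_comm (B _), ← sum_mul, hA, one_mul]
    exact sum_mul_prod_chain_eq_one B (fun t => A t.succ) hB fun t => hA t.succ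

theorem sum_lintegral_mul_ofReal_eq_of_sum_eq_one {X K : Type*} [MeasurableSpace X] [Fintype K]
    (μ : Measure X) {h : X → ℝ≥0∞} (hh : Measurable h) {p : K → X → ℝ}
    (hp : ∀ k, Measurable (p k)) (hp₀ : ∀ k x, 0 ≤ p k x) (hp₁ : ∀ x, ∑ k, p k x = 1) :
    ∑ k, ∫⁻ x, h x * ENNReal.ofReal (p k x) ∂μ = ∫⁻ x, h x ∂μ := by
  rw [← lintegral_finsetSum (f := fun k x => h x * ENNReal.ofReal (p k x)) _
    fun k _ => hh.mul (hp k).ennreal_ofReal]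
  congr with x
  rw [← mul_sum, ← ENNReal.ofReal_sum_of_nonneg fun k _ => hp₀ k x, hp₁, ENNReal.ofReal_one,
    mul_one]

section PermuteRows

variable {ι κ : Type*}

def permuteRows (σ : ι → Equiv.Perm κ) (v : ι → κ → Z) : ι → κ → Z :=
  fun t i => v t (σ t i)

theorem lintegral_comp_permuteRows [Fintype ι] [Fintype κ] [MeasurableSpace Z] (ν : Measure Z)
    [SigmaFinite ν] (σ : ι → Equiv.Perm κ) (g : (ι → κ → Z) → ℝ≥0∞) :
    ∫⁻ v, g (permuteRows σ v) ∂(Measure.pi fun _ : ι => Measure.pi fun _ : κ => ν) =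
      ∫⁻ v, g v ∂(Measure.pi fun _ : ι => Measure.pi fun _ : κ => ν) := by
  let e : (ι → κ → Z) ≃ᵐ (ι → κ → Z) :=
    MeasurableEquiv.piCongrRight fun t => MeasurableEquiv.arrowCongr' (σ t).symm (.refl Z)
  have he : MeasurePreserving e (Measure.pi fun _ : ι => Measure.pi fun _ : κ => ν)
      (Measure.pi fun _ : ι => Measure.pi fun _ : κ => ν) :=
    measurePreserving_pi _ _ fun t => measurePreserving_arrowCongr' _ _ _ _ fun _ => .id ν
  exact (he.lintegral_map_equiv g e).symm

end PermuteRows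

section ParticleSystem

variable {n m : ℕ} (m₀ : Z → ℝ) (f : Z → Z → ℝ) (w : Fin (n + 1) → Z → ℝ)
  (k : Fin (n + 1) → Fin (m + 1)) (v : Fin (n + 1) → Fin (m + 1) → Z)

/-- The factor of `ψ` belonging to particle `i` at time `t + 1`. -/
noncomputable def mixtureDensity (t : Fin n) (i : Fin (m + 1)) : ℝ :=
  (∑ j, w t.castSucc (v t.castSucc j) * f (v t.castSucc j) (v t.succ i)) /
    ∑ j, w t.castSucc (v t.castSucc j)

noncomputable def psiAlongPath : ℝ :=
  m₀ (v 0 (k 0)) * ∏ t : Fin n, mixtureDensity f w v t (k t.succ)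

/-- `Φ` with the reference path in the slots `k` instead of `𝟏`. -/
noncomputable def csmcKernelDensity : ℝ :=
  (∏ i ∈ univ.erase (k 0), m₀ (v 0 i)) *
    ∏ t : Fin n, ∏ i ∈ univ.erase (k t.succ), mixtureDensity f w v t i

theorem piPhi_eq_div_mul_csmcKernelDensity (C : ℝ) :
    piPhi n m m₀ f w C v =
      gammaSSM n m₀ f w (pathOf n m v (onePath n m)) / C *
        csmcKernelDensity m₀ f w (onePath n m) v :=
  mul_assoc _ _ _

theorem psiPF_eq_prod_mixtureDensity :
    psiPF n m m₀ f w v = (∏ i, m₀ (v 0 i)) * ∏ t : Fin n, ∏ i, mixtureDensity f w v t i :=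
  rfl

theorem psiPF_eq_psiAlongPath_mul_csmcKernelDensity :
    psiPF n m m₀ f w v = psiAlongPath m₀ f w k v * csmcKernelDensity m₀ f w k v := by
  rw [psiPF_eq_prod_mixtureDensity, psiAlongPath, csmcKernelDensity,
    ← mul_prod_erase _ _ (mem_univ (k 0)), mul_mul_mul_comm, ← prod_mul_distrib]
  simp_rw [mul_prod_erase _ _ (mem_univ _)]

theorem backwardFactor_mul_mixtureDensity_mul_sum (hfpos : ∀ z z', 0 < f z z')
    (hwpos : ∀ t z, 0 < w t z) (t : Fin n) (j i : Fin (m + 1)) :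
    w t.castSucc (v t.castSucc j) * f (v t.castSucc j) (v t.succ i) /
          (∑ j', w t.castSucc (v t.castSucc j') * f (v t.castSucc j') (v t.succ i)) *
        mixtureDensity f w v t i * ∑ j', w t.castSucc (v t.castSucc j') =
      w t.castSucc (v t.castSucc j) * f (v t.castSucc j) (v t.succ i) := by
  have hD : ∑ j', w t.castSucc (v t.castSucc j') * f (v t.castSucc j') (v t.succ i) ≠ 0 :=
    (sum_pos (fun _ _ => mul_pos (hwpos _ _) (hfpos _ _)) univ_nonempty).ne'
  have hW : ∑ j', w t.castSucc (v t.castSucc j') ≠ 0 :=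
    (sum_pos (fun _ _ => hwpos _ _) univ_nonempty).ne'
  rw [mixtureDensity]
  field_simp

theorem gammaSSM_pathOf_eq (hfpos : ∀ z z', 0 < f z z') (hwpos : ∀ t z, 0 < w t z) :
    gammaSSM n m₀ f w (pathOf n m v k) =
      ((m : ℝ) + 1) ^ (n + 1) * bBack n m f w k v * psiAlongPath m₀ f w k v * Chat n m w v := by
  have hM : ((m : ℝ) + 1) ^ (n + 1) * ((m : ℝ) + 1)⁻¹ ^ (n + 1) = 1 := by
    rw [← mul_pow, mul_inv_cancel₀ (by positivity), one_pow]
  simp only [gammaSSM, pathOf, bBack, psiAlongPath, Chat, prod_mul_distrib, prod_const, card_univ,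
    Fintype.card_fin]
  rw [Fin.prod_univ_castSucc (fun t => w t (v t (k t))),
    Fin.prod_univ_castSucc (fun t => ∑ i, w t (v t i))]
  set wL := w (Fin.last n) (v (Fin.last n) (k (Fin.last n)))
  set WL := ∑ i, w (Fin.last n) (v (Fin.last n) i)
  calc _ = (((m : ℝ) + 1) ^ (n + 1) * ((m : ℝ) + 1)⁻¹ ^ (n + 1)) * (wL / WL * WL) *
        m₀ (v 0 (k 0)) * ∏ t : Fin n, w t.castSucc (v t.castSucc (k t.castSucc)) *
            f (v t.castSucc (k t.castSucc)) (v t.succ (k t.succ)) := by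
        rw [hM, div_mul_cancel₀ wL (sum_pos (fun _ _ => hwpos _ _) univ_nonempty).ne',
          prod_mul_distrib]
        ring
    _ = _ := by
        rw [← prod_congr rfl fun t _ => backwardFactor_mul_mixtureDensity_mul_sum f w v hfpos
          hwpos t (k t.castSucc) (k t.succ), prod_mul_distrib, prod_mul_distrib]
        ring

theorem sum_bBack_eq_one (hfpos : ∀ z z', 0 < f z z') (hwpos : ∀ t z, 0 < w t z) :
    ∑ k, bBack n m f w k v = 1 := by
  refine sum_mul_prod_chain_eq_one
    (fun i => w (Fin.last n) (v (Fin.last n) i) / ∑ i', w (Fin.last n) (v (Fin.last n) i'))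
    (fun t j i => w t.castSucc (v t.castSucc j) * f (v t.castSucc j) (v t.succ i) /
      ∑ j', w t.castSucc (v t.castSucc j') * f (v t.castSucc j') (v t.succ i)) ?_ fun t i => ?_
  · rw [← sum_div, div_self (sum_pos (fun _ _ => hwpos _ _) univ_nonempty).ne']
  · rw [← sum_div,
      div_self (sum_pos (fun _ _ => mul_pos (hwpos _ _) (hfpos _ _)) univ_nonempty).ne']

theorem bBack_nonneg (hf : ∀ z z', 0 ≤ f z z') (hw : ∀ t z, 0 ≤ w t z) :
    0 ≤ bBack n m f w k v :=
  mul_nonneg (div_nonneg (hw _ _) (sum_nonneg fun _ _ => hw _ _)) <| prod_nonneg fun _ _ =>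
    div_nonneg (mul_nonneg (hw _ _) (hf _ _)) (sum_nonneg fun _ _ => mul_nonneg (hw _ _) (hf _ _))

section Relabelling

variable (σ : Fin (n + 1) → Equiv.Perm (Fin (m + 1)))

theorem pathOf_permuteRows :
    pathOf n m (permuteRows σ v) k = pathOf n m v fun t => σ t (k t) :=
  rfl

theorem bBack_permuteRows :
    bBack n m f w k (permuteRows σ v) = bBack n m f w (fun t => σ t (k t)) v := by
  simp only [bBack, permuteRows, fun s => Equiv.sum_comp (σ s) fun i => w s (v s i),
    fun s y => Equiv.sum_comp (σ s) fun i => w s (v s i) * f (v s i) y]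

theorem mixtureDensity_permuteRows (t : Fin n) (i : Fin (m + 1)) :
    mixtureDensity f w (permuteRows σ v) t i = mixtureDensity f w v t (σ t.succ i) := by
  simp only [mixtureDensity, permuteRows, fun s => Equiv.sum_comp (σ s) fun i => w s (v s i),
    fun s y => Equiv.sum_comp (σ s) fun i => w s (v s i) * f (v s i) y]

theorem psiPF_permuteRows : psiPF n m m₀ f w (permuteRows σ v) = psiPF n m m₀ f w v := by
  simp only [psiPF_eq_prod_mixtureDensity, mixtureDensity_permuteRows]
  simp only [permuteRows, Equiv.prod_comp (σ 0) fun i => m₀ (v 0 i),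
    fun t => Equiv.prod_comp (σ t.succ) fun i => mixtureDensity f w v t i]

theorem Chat_permuteRows : Chat n m w (permuteRows σ v) = Chat n m w v := by
  simp only [Chat, permuteRows, fun s => Equiv.sum_comp (σ s) fun i => w s (v s i)]

theorem csmcKernelDensity_permuteRows :
    csmcKernelDensity m₀ f w k (permuteRows σ v) =
      csmcKernelDensity m₀ f w (fun t => σ t (k t)) v := by
  simp only [csmcKernelDensity, mixtureDensity_permuteRows]
  congr 1
  · exact prod_equiv (σ 0) (by simp) fun _ _ => rfl
  · exact prod_congr rfl fun t _ => prod_equiv (σ t.succ) (by simp) fun _ _ => rfl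

end Relabelling

theorem piPhi_permuteRows_swap (hfpos : ∀ z z', 0 < f z z') (hwpos : ∀ t z, 0 < w t z)
    (C : ℝ) :
    piPhi n m m₀ f w C (permuteRows (fun t => Equiv.swap 0 (k t)) v) =
      ((m : ℝ) + 1) ^ (n + 1) * bBack n m f w k v * (psiPF n m m₀ f w v * Chat n m w v / C) := by
  have hk : (fun t => Equiv.swap 0 (k t) (onePath n m t)) = k :=
    funext fun t => Equiv.swap_apply_left 0 (k t)
  rw [piPhi_eq_div_mul_csmcKernelDensity, pathOf_permuteRows, csmcKernelDensity_permuteRows, hk,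
    gammaSSM_pathOf_eq m₀ f w k v hfpos hwpos,
    psiPF_eq_psiAlongPath_mul_csmcKernelDensity m₀ f w k v]
  ring

section Measurability

variable [MeasurableSpace Z]

theorem measurable_pathOf : Measurable fun v : Fin (n + 1) → Fin (m + 1) → Z => pathOf n m v k := by
  unfold pathOf
  fun_prop

theorem measurable_bBack (hf : Measurable fun p : Z × Z => f p.1 p.2)
    (hw : ∀ t, Measurable (w t)) : Measurable (bBack n m f w k) := by
  have : Measurable (Function.uncurry f) := hf
  unfold bBack
  fun_prop

theorem measurable_psiPF (hm₀ : Measurable m₀) (hf : Measurable fun p : Z × Z => f p.1 p.2)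
    (hw : ∀ t, Measurable (w t)) : Measurable (psiPF n m m₀ f w) := by
  have : Measurable (Function.uncurry f) := hf
  unfold psiPF
  fun_prop

theorem measurable_Chat (hw : ∀ t, Measurable (w t)) : Measurable (Chat n m w) := by
  unfold Chat
  fun_prop

theorem lintegral_bBack_mul_pathOf_eq (ν : Measure Z) [SigmaFinite ν]
    (F : (Fin (n + 1) → Z) → ℝ≥0∞) (H : (Fin (n + 1) → Fin (m + 1) → Z) → ℝ≥0∞) :
    ∫⁻ v, ENNReal.ofReal (bBack n m f w k v) * F (pathOf n m v k) * H v
        ∂(Measure.pi fun _ => Measure.pi fun _ => ν) =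
      ∫⁻ v, ENNReal.ofReal (bBack n m f w (onePath n m) v) * F (pathOf n m v (onePath n m)) *
          H (permuteRows (fun t => Equiv.swap 0 (k t)) v)
        ∂(Measure.pi fun _ => Measure.pi fun _ => ν) := by
  have hk : (fun t => Equiv.swap 0 (k t) (k t)) = onePath n m :=
    funext fun t => Equiv.swap_apply_right 0 (k t)
  rw [← lintegral_comp_permuteRows ν fun t => Equiv.swap 0 (k t)]
  simp only [bBack_permuteRows, pathOf_permuteRows, hk]

end Measurability

end ParticleSystem

theorem backward_path_expectation_identity_general
    [MeasurableSpace Z] (ν : Measure Z) [SigmaFinite ν] (n m : ℕ)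
    (m₀ : Z → ℝ) (f : Z → Z → ℝ) (w : Fin (n + 1) → Z → ℝ)
    (hm₀ : Measurable m₀) (hf : Measurable fun p : Z × Z => f p.1 p.2)
    (hw : ∀ t, Measurable (w t))
    (hfpos : ∀ z z', 0 < f z z') (hwpos : ∀ t z, 0 < w t z)
    (C : ℝ)
    (F : (Fin (n + 1) → Z) → ℝ≥0∞) (hF : Measurable F) :
    ∑ k : Fin (n + 1) → Fin (m + 1),
        ∫⁻ v, ENNReal.ofReal (bBack n m f w k v) * F (pathOf n m v k) *
            ENNReal.ofReal (piPhi n m m₀ f w C v)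
          ∂(Measure.pi fun _ : Fin (n + 1) => Measure.pi fun _ : Fin (m + 1) => ν)
      = ∑ k : Fin (n + 1) → Fin (m + 1),
          ∫⁻ v, ENNReal.ofReal (bBack n m f w k v) * F (pathOf n m v k) *
              ENNReal.ofReal (psiPF n m m₀ f w v * Chat n m w v / C)
            ∂(Measure.pi fun _ : Fin (n + 1) => Measure.pi fun _ : Fin (m + 1) => ν) := by
  have hb : ∀ k v, 0 ≤ bBack n m f w k v :=
    fun k v => bBack_nonneg f w k v (fun z z' => (hfpos z z').le) fun t z => (hwpos t z).le
  set g := fun v => ENNReal.ofReal (bBack n m f w (onePath n m) v) *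
    F (pathOf n m v (onePath n m)) * ENNReal.ofReal (psiPF n m m₀ f w v * Chat n m w v / C)
  have hg : Measurable g :=
    ((measurable_bBack f w _ hf hw).ennreal_ofReal.mul (hF.comp (measurable_pathOf _))).mul
      (((measurable_psiPF m₀ f w hm₀ hf hw).mul (measurable_Chat w hw)).div_const C).ennreal_ofReal
  have hsplit : ∀ k v, ENNReal.ofReal (((m : ℝ) + 1) ^ (n + 1) * bBack n m f w k v *
      (psiPF n m m₀ f w v * Chat n m w v / C)) =
        ENNReal.ofReal (psiPF n m m₀ f w v * Chat n m w v / C) *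
          ENNReal.ofReal (((m : ℝ) + 1) ^ (n + 1)) * ENNReal.ofReal (bBack n m f w k v) := by
    intro k v
    rw [ENNReal.ofReal_mul (mul_nonneg (by positivity) (hb k v)),
      ENNReal.ofReal_mul (by positivity)]
    ring
  rw [sum_congr rfl fun k _ => lintegral_bBack_mul_pathOf_eq f w k ν F _,
    sum_congr rfl fun k _ => lintegral_bBack_mul_pathOf_eq f w k ν F _]
  simp only [piPhi_permuteRows_swap m₀ f w _ _ hfpos hwpos, psiPF_permuteRows, Chat_permuteRows,
    hsplit, ← mul_assoc]
  rw [sum_lintegral_mul_ofReal_eq_of_sum_eq_one _ (hg.mul_const _)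
      (fun k => measurable_bBack f w k hf hw) hb fun v => sum_bBack_eq_one f w v hfpos hwpos,
    lintegral_mul_const' _ _ ENNReal.ofReal_ne_top, sum_const, card_univ, nsmul_eq_mul,
    Fintype.card_fun, Fintype.card_fin, Fintype.card_fin, mul_comm]
  exact_mod_cast congrArg (· * ∫⁻ v, g v ∂_) (ENNReal.ofReal_natCast ((m + 1) ^ (n + 1)))

/-- For every measurable `F : Z^T → [0,∞]`,
`∑_k ∫ b(k|v) F(v^{(k)}) (π⊗Φ)(v) ν^{⊗TM}(dv) = ∑_k ∫ b(k|v) F(v^{(k)}) ψ̄(v) ν^{⊗TM}(dv)`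
with `ψ̄ = ψ·Ĉ/C`. -/
theorem backward_path_expectation_identity
    [MeasurableSpace Z] (ν : Measure Z) [SigmaFinite ν] (n m : ℕ)
    (m₀ : Z → ℝ) (f : Z → Z → ℝ) (w : Fin (n + 1) → Z → ℝ)
    (hm₀ : Measurable m₀) (hf : Measurable fun p : Z × Z => f p.1 p.2)
    (hw : ∀ t, Measurable (w t))
    (hm₀pos : ∀ z, 0 < m₀ z) (hfpos : ∀ z z', 0 < f z z') (hwpos : ∀ t z, 0 < w t z)
    (C : ℝ)
    (hC : C = ∫ z, gammaSSM n m₀ f w z ∂(Measure.pi fun _ : Fin (n + 1) => ν))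
    (hCpos : 0 < C)
    (hCint : Integrable (gammaSSM n m₀ f w) (Measure.pi fun _ : Fin (n + 1) => ν))
    (F : (Fin (n + 1) → Z) → ℝ≥0∞) (hF : Measurable F) :
    ∑ k : Fin (n + 1) → Fin (m + 1),
        ∫⁻ v, ENNReal.ofReal (bBack n m f w k v) * F (pathOf n m v k) *
            ENNReal.ofReal (piPhi n m m₀ f w C v)
          ∂(Measure.pi fun _ : Fin (n + 1) => Measure.pi fun _ : Fin (m + 1) => ν)
      = ∑ k : Fin (n + 1) → Fin (m + 1),
          ∫⁻ v, ENNReal.ofReal (bBack n m f w k v) * F (pathOf n m v k) *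
              ENNReal.ofReal (psiPF n m m₀ f w v * Chat n m w v / C)
            ∂(Measure.pi fun _ : Fin (n + 1) => Measure.pi fun _ : Fin (m + 1) => ν) :=
  backward_path_expectation_identity_general ν n m m₀ f w hm₀ hf hw hfpos hwpos C F hF
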